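/- arXiv:2008.04338 — 5 statements merged into one kernel-verified Lean document; each statement's English description precedes it below -/
import Mathlib

section
/- For distinct nodes z₀,…,zₙ, the squared partial fraction expansion holds: ∏_{i=0}^{n} 1/(z − zᵢ)² = ∑_{i=0}^{n} (uᵢ² + vᵢ(z − zᵢ))/(z − zᵢ)², where uᵢ = ∏_{j≠i} 1/(zᵢ − zⱼ) and vᵢ = −2 uᵢ² ∑_{j≠i} 1/(zᵢ − zⱼ), for all z distinct from every zᵢ. -/
/-!
Squaring Lagrange's partial fraction expansion `∏ 1/(x - zᵢ) = ∑ uᵢ/(x - zᵢ)` produces the terms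
`uᵢ²/(x - zᵢ)²` and cross terms `uᵢuⱼ/((x - zᵢ)(x - zⱼ))`. Splitting each cross term by
`1/((x - a)(x - b)) = (1/(x - a) - 1/(x - b))/(a - b)` turns their sum into
`∑ᵢ 2uᵢ/(x - zᵢ) · ∑_{j≠i} uⱼ/(zᵢ - zⱼ)`, and the inner sum equals `-uᵢ ∑_{j≠i} 1/(zᵢ - zⱼ)`:
that is the derivative at `zᵢ` of the polynomial identity `∑ⱼ uⱼ ∏_{k≠j} (X - zₖ) = 1`.
-/

open Finset Polynomial

namespace Finset

variable {ι M : Type*} [DecidableEq ι]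

theorem sum_sum_erase_comm [AddCommMonoid M] (s : Finset ι) (f : ι → ι → M) :
    ∑ i ∈ s, ∑ j ∈ s.erase i, f i j = ∑ i ∈ s, ∑ j ∈ s.erase i, f j i :=
  sum_comm' fun i j => by simp only [mem_erase]; tauto

theorem sq_sum_of_mul_eq_add [CommSemiring M] {s : Finset ι} {a g : ι → M} (c : ι → ι → M)
    (hmul : ∀ i ∈ s, ∀ j ∈ s, i ≠ j → a i * a j = c i j * g i + c j i * g j) :
    (∑ i ∈ s, a i) ^ 2 = ∑ i ∈ s, (a i ^ 2 + 2 * g i * ∑ j ∈ s.erase i, c i j) := by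
  have hcross :
      ∑ i ∈ s, ∑ j ∈ s.erase i, a i * a j = ∑ i ∈ s, 2 * g i * ∑ j ∈ s.erase i, c i j := by
    calc ∑ i ∈ s, ∑ j ∈ s.erase i, a i * a j
        = ∑ i ∈ s, ∑ j ∈ s.erase i, (c i j * g i + c j i * g j) :=
          sum_congr rfl fun i hi => sum_congr rfl fun j hj =>
            hmul i hi j (mem_of_mem_erase hj) (ne_of_mem_erase hj).symm
      _ = ∑ i ∈ s, 2 * g i * ∑ j ∈ s.erase i, c i j := by
          simp only [sum_add_distrib]
          rw [← sum_sum_erase_comm s fun i j => c i j * g i, ← two_mul, mul_sum]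
          simp only [mul_sum, mul_assoc, mul_comm (g _)]
  rw [sum_add_distrib, ← hcross, ← sum_add_distrib, sq, sum_mul_sum]
  refine sum_congr rfl fun i hi => ?_
  rw [← add_sum_erase s _ hi, sq]

end Finset

namespace Lagrange

variable {F ι : Type*} [Field F] [DecidableEq ι] {s : Finset ι} {v : ι → F}

theorem sum_nodalWeight_mul_inv_sub (hvs : Set.InjOn v s) (hs : s.Nonempty) {x : F}
    (hx : ∀ i ∈ s, x ≠ v i) :
    ∑ i ∈ s, nodalWeight s v i * (x - v i)⁻¹ = ∏ i ∈ s, (x - v i)⁻¹ := by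
  have h := eval_interpolate_not_at_node (1 : ι → F) hx
  simp only [interpolate_one hvs hs, eval_one, Pi.one_apply, mul_one, eval_nodal] at h
  rw [prod_inv_distrib]
  exact eq_inv_of_mul_eq_one_right h.symm

theorem eval_nodal_erase {t : Finset ι} {k : ι} (hk : k ∈ t) {x : F} (hx : x ≠ v k) :
    eval x (nodal (t.erase k) v) = eval x (nodal t v) * (x - v k)⁻¹ := by
  rw [nodal_eq_mul_nodal_erase hk, eval_mul, mul_comm, eval_sub, eval_X, eval_C,
    inv_mul_cancel_left₀ (sub_ne_zero.2 hx)]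

theorem sum_nodalWeight_mul_inv_sub_node (hvs : Set.InjOn v s) {i : ι} (hi : i ∈ s) :
    ∑ j ∈ s.erase i, nodalWeight s v j * (v i - v j)⁻¹
      = -nodalWeight s v i * ∑ j ∈ s.erase i, (v i - v j)⁻¹ := by
  have hne : ∀ j ∈ s.erase i, v i ≠ v j := fun j hj h =>
    ne_of_mem_erase hj (hvs (mem_of_mem_erase hj) hi h.symm)
  have hsum : ∑ j ∈ s, C (nodalWeight s v j) * nodal (s.erase j) v = 1 := by
    rw [← sum_basis hvs ⟨i, hi⟩]
    exact sum_congr rfl fun j hj => by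
      rw [basis_eq_prod_sub_inv_mul_nodal_div hj, nodal_erase_eq_nodal_div hj]
  have hderiv := congrArg (fun p => eval (v i) (derivative p)) hsum
  simp only [derivative_sum, derivative_C_mul, eval_finsetSum, eval_mul, eval_C, derivative_one,
    eval_zero] at hderiv
  rw [← add_sum_erase _ _ hi] at hderiv
  set P := eval (v i) (nodal (s.erase i) v)
  have hself : eval (v i) (derivative (nodal (s.erase i) v))
      = P * ∑ j ∈ s.erase i, (v i - v j)⁻¹ := by
    rw [derivative_nodal, eval_finsetSum, mul_sum]
    exact sum_congr rfl fun j hj => eval_nodal_erase hj (hne j hj)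
  have hother : ∀ j ∈ s.erase i, eval (v i) (derivative (nodal (s.erase j) v))
      = P * (v i - v j)⁻¹ := fun j hj => by
    have hij : i ∈ s.erase j := mem_erase.2 ⟨ne_of_mem_erase hj |>.symm, hi⟩
    rw [eval_nodal_derivative_eval_node_eq hij, erase_right_comm, eval_nodal_erase hj (hne j hj)]
  have hP : nodalWeight s v i * P = 1 := by
    have hw := nodalWeight_ne_zero hvs hi
    rw [nodalWeight_eq_eval_nodal_erase_inv] at hw ⊢
    exact inv_mul_cancel₀ (by simpa using hw)
  rw [hself, sum_congr rfl fun j hj => congrArg _ (hother j hj),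
    sum_congr rfl fun j _ => mul_left_comm _ P _, ← mul_sum] at hderiv
  linear_combination nodalWeight s v i * hderiv
    - (nodalWeight s v i * ∑ j ∈ s.erase i, (v i - v j)⁻¹
      + ∑ j ∈ s.erase i, nodalWeight s v j * (v i - v j)⁻¹) * hP

theorem prod_inv_sub_sq_eq_sum (hvs : Set.InjOn v s) (hs : s.Nonempty) {x : F}
    (hx : ∀ i ∈ s, x ≠ v i) :
    ∏ i ∈ s, ((x - v i) ^ 2)⁻¹ = ∑ i ∈ s, (nodalWeight s v i ^ 2
        + -2 * nodalWeight s v i ^ 2 * (∑ j ∈ s.erase i, (v i - v j)⁻¹) * (x - v i))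
        / (x - v i) ^ 2 := by
  have hxv : ∀ i ∈ s, x - v i ≠ 0 := fun i hi => sub_ne_zero.2 (hx i hi)
  calc ∏ i ∈ s, ((x - v i) ^ 2)⁻¹
      = (∑ i ∈ s, nodalWeight s v i * (x - v i)⁻¹) ^ 2 := by
        rw [sum_nodalWeight_mul_inv_sub hvs hs hx, ← prod_pow]
        simp only [inv_pow]
    _ = ∑ i ∈ s, ((nodalWeight s v i * (x - v i)⁻¹) ^ 2 + 2 * (x - v i)⁻¹
          * ∑ j ∈ s.erase i, nodalWeight s v i * (nodalWeight s v j * (v i - v j)⁻¹)) := by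
        refine sq_sum_of_mul_eq_add _ fun i hi j hj hij => ?_
        have hvij := sub_ne_zero.2 (hvs.ne hi hj hij)
        have hvji := sub_ne_zero.2 (hvs.ne hj hi hij.symm)
        field_simp [hxv i hi, hxv j hj]
        ring
    _ = _ := sum_congr rfl fun i hi => by
        rw [← mul_sum, sum_nodalWeight_mul_inv_sub_node hvs hi]
        field_simp [hxv i hi]

end Lagrange

/-- Squared partial fraction expansion: for pairwise distinct nodes `z i` and
`w` distinct from all of them,
`∏ i, 1/(w − z i)² = ∑ i, (u i² + v i (w − z i)) / (w − z i)²`,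
where `u i = ∏_{j ≠ i} 1/(z i − z j)` and `v i = −2 u i² ∑_{j ≠ i} 1/(z i − z j)`. -/
theorem squared_partial_fraction_expansion (n : ℕ) (z : Fin (n + 1) → ℂ)
    (hz : Function.Injective z) (w : ℂ) (hw : ∀ i, w ≠ z i)
    (u v : Fin (n + 1) → ℂ)
    (hu : ∀ i, u i = ∏ j ∈ univ.erase i, (z i - z j)⁻¹)
    (hv : ∀ i, v i = -2 * (u i) ^ 2 * ∑ j ∈ univ.erase i, (z i - z j)⁻¹) :
    ∏ i, ((w - z i) ^ 2)⁻¹ = ∑ i, ((u i) ^ 2 + v i * (w - z i)) / (w - z i) ^ 2 := by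
  obtain rfl : u = Lagrange.nodalWeight univ z := funext hu
  obtain rfl : v = _ := funext hv
  exact Lagrange.prod_inv_sub_sq_eq_sum hz.injOn univ_nonempty fun i _ => hw i
end

section
/- For each integer m ≥ 1 and n ≥ 0, the equation ℓ^{n+2} − (m+1)ℓ^{n+1} + m = 0 has a unique root ℓ in the open interval (1, m+1] when n ≥ 1, and moreover this root satisfies ℓ = (m+1) − m·ℓ^{−(n+1)}. -/
open Finset

/-- For integers `m ≥ 1` and `n ≥ 1`, the equation
`ℓ^(n+2) − (m+1) ℓ^(n+1) + m = 0` has a unique root `ℓ` in `(1, m+1]`, and this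
root satisfies `ℓ = (m+1) − m ℓ^{-(n+1)}`. -/
theorem convergence_order_equation (m n : ℕ) (hm : 1 ≤ m) (hn : 1 ≤ n) :
    (∃! ℓ : ℝ, ℓ ∈ Set.Ioc (1 : ℝ) (m + 1) ∧
      ℓ ^ (n + 2) - (m + 1) * ℓ ^ (n + 1) + m = 0) ∧
    (∀ ℓ : ℝ, ℓ ∈ Set.Ioc (1 : ℝ) (m + 1) →
      ℓ ^ (n + 2) - (m + 1) * ℓ ^ (n + 1) + m = 0 →
      ℓ = (m + 1) - m * ℓ ^ (-(n + 1 : ℤ))) := by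
  have hm1 : (1:ℝ) ≤ (m:ℝ) := by exact_mod_cast hm
  have hn1 : (1:ℝ) ≤ (n:ℝ) := by exact_mod_cast hn
  set h : ℝ → ℝ := fun x => 1 - (m:ℝ) * ∑ j ∈ range (n+1), (x⁻¹)^(j+1) with hh
  -- key factorization
  have key : ∀ x : ℝ, x ≠ 0 →
      x ^ (n + 2) - ((m:ℝ) + 1) * x ^ (n + 1) + m = (x - 1) * x^(n+1) * h x := by
    intro x hx
    have hsum : x^(n+1) * ∑ j ∈ range (n+1), (x⁻¹)^(j+1)
        = ∑ i ∈ range (n+1), x^i := by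
      rw [Finset.mul_sum]
      rw [← Finset.sum_range_reflect (fun i => x ^ i) (n+1)]
      apply Finset.sum_congr rfl
      intro j hj
      have hj' : j + 1 ≤ n + 1 := Finset.mem_range.mp hj
      rw [inv_pow, ← pow_sub₀ x hx hj']
      congr 1
      omega
    have geom := geom_sum_mul x (n+1)
    simp only [hh]
    linear_combination ((m:ℝ) * (x - 1)) * hsum + (m:ℝ) * geom
  -- strict monotonicity of h on positives
  have mono : ∀ a b : ℝ, 0 < a → a < b → h a < h b := by
    intro a b ha hab
    have hb : 0 < b := ha.trans hab
    have hsum : ∑ j ∈ range (n+1), (b⁻¹)^(j+1)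
        < ∑ j ∈ range (n+1), (a⁻¹)^(j+1) := by
      apply Finset.sum_lt_sum_of_nonempty (by simp)
      intro j _
      exact pow_lt_pow_left₀ (by exact inv_strictAnti₀ ha hab)
        (inv_nonneg.2 hb.le) (Nat.succ_ne_zero j)
    have hmpos : (0:ℝ) < m := by linarith
    simp only [hh]
    nlinarith [mul_lt_mul_of_pos_left hsum hmpos]
  -- continuity of h on the interval
  have hcont : ContinuousOn h (Set.Icc (1:ℝ) ((m:ℝ)+1)) := by
    apply ContinuousOn.sub continuousOn_const
    apply ContinuousOn.mul continuousOn_const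
    apply continuousOn_finset_sum
    intro j _
    exact (continuousOn_id.inv₀ (fun x hx => by
      have h1 : (1:ℝ) ≤ x := hx.1
      intro h0; simp only [id_eq] at h0; rw [h0] at h1; linarith)).pow _
  -- sign at 1
  have h1neg : h 1 < 0 := by
    simp only [hh, inv_one, one_pow, Finset.sum_const, Finset.card_range,
      nsmul_eq_mul, Nat.cast_add, Nat.cast_one]
    nlinarith
  -- sign at m+1
  have hMne : ((m:ℝ)+1) ≠ 0 := by positivity
  have e2 : (m:ℝ) * (((m:ℝ)+1)^(n+1) * h ((m:ℝ)+1)) = m := by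
    have e := key ((m:ℝ)+1) hMne
    linear_combination -e
  have hMpos : 0 < h ((m:ℝ)+1) := by
    by_contra hle
    push_neg at hle
    have h1 : ((m:ℝ)+1)^(n+1) * h ((m:ℝ)+1) ≤ 0 :=
      mul_nonpos_of_nonneg_of_nonpos (by positivity) hle
    have h2 : (m:ℝ) * (((m:ℝ)+1)^(n+1) * h ((m:ℝ)+1)) ≤ 0 :=
      mul_nonpos_of_nonneg_of_nonpos (by positivity) h1
    linarith
  -- roots of f in the interval are roots of h
  have root_h : ∀ y : ℝ, y ∈ Set.Ioc (1:ℝ) ((m:ℝ)+1) →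
      y ^ (n + 2) - ((m:ℝ) + 1) * y ^ (n + 1) + m = 0 → h y = 0 := by
    intro y hy hf
    have hy1 : (1:ℝ) < y := hy.1
    have hy0 : y ≠ 0 := by linarith
    have := key y hy0
    rw [hf] at this
    have hne : (y - 1) * y^(n+1) ≠ 0 := by
      have : (0:ℝ) < (y - 1) * y^(n+1) :=
        mul_pos (by linarith) (by positivity)
      linarith
    rcases mul_eq_zero.mp this.symm with h' | h'
    · exact absurd h' hne
    · exact h'
  -- existence via IVT
  obtain ⟨c, hcmem, hc0⟩ :=
    intermediate_value_Ioo (by linarith : (1:ℝ) ≤ (m:ℝ)+1) hcont ⟨h1neg, hMpos⟩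
  have hcIoc : c ∈ Set.Ioc (1:ℝ) ((m:ℝ)+1) := ⟨hcmem.1, hcmem.2.le⟩
  have hc0' : h c = 0 := hc0
  have hcne : c ≠ 0 := by have := hcmem.1; intro h0; rw [h0] at this; linarith
  have hcroot : c ^ (n + 2) - ((m:ℝ) + 1) * c ^ (n + 1) + m = 0 := by
    rw [key c hcne, hc0', mul_zero]
  constructor
  · refine ⟨c, ⟨hcIoc, hcroot⟩, ?_⟩
    intro y ⟨hy, hyf⟩
    have hyh : h y = 0 := root_h y hy hyf
    rcases lt_trichotomy y c with hlt | heq | hgt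
    · have := mono y c (by linarith [hy.1]) hlt
      rw [hyh, hc0'] at this; linarith
    · exact heq
    · have := mono c y (by linarith [hcmem.1]) hgt
      rw [hyh, hc0'] at this; linarith
  · intro ℓ hℓ hf
    have hℓ1 : (1:ℝ) < ℓ := hℓ.1
    have hℓ0 : ℓ ≠ 0 := by linarith
    have hz : ℓ ^ (-(n + 1 : ℤ)) = (ℓ ^ (n+1))⁻¹ := by
      rw [zpow_neg, show ((n:ℤ) + 1) = ((n+1 : ℕ) : ℤ) by push_cast; ring,
        zpow_natCast]
    rw [hz]
    have hp : ℓ ^ (n+1) ≠ 0 := pow_ne_zero _ hℓ0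
    field_simp
    linear_combination hf
end

section
/- If ℓₙ denotes the unique root in (1, m+1) of ℓ^{n+1} = m(ℓ^{n+1} − 1)/(ℓ − 1) for fixed integer m ≥ 1, then ℓₙ is strictly increasing in n and ℓₙ → m + 1 as n → ∞. -/
open Filter Finset

private lemma aux_key (m K : ℕ) (x y : ℝ) (hy : 0 < y) (hyx : y ≤ x) :
    (y ^ K - (m : ℝ) * ∑ i ∈ range K, y ^ i) * x ^ K ≤
      (x ^ K - (m : ℝ) * ∑ i ∈ range K, x ^ i) * y ^ K := by
  have hx : 0 < x := lt_of_lt_of_le hy hyx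
  have hterm : ∀ i ∈ range K, x ^ i * y ^ K ≤ y ^ i * x ^ K := by
    intro i hi
    rw [mem_range] at hi
    have h1 : x ^ i * y ^ K = (x * y) ^ i * y ^ (K - i) := by
      rw [mul_pow, mul_assoc, ← pow_add]
      congr 2
      omega
    have h2 : y ^ i * x ^ K = (x * y) ^ i * x ^ (K - i) := by
      rw [mul_pow, mul_comm (x ^ i) (y ^ i), mul_assoc, ← pow_add]
      congr 2
      omega
    rw [h1, h2]
    exact mul_le_mul_of_nonneg_left (pow_le_pow_left₀ hy.le hyx _) (by positivity)
  have hsum : ∑ i ∈ range K, x ^ i * y ^ K ≤ ∑ i ∈ range K, y ^ i * x ^ K :=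
    Finset.sum_le_sum hterm
  rw [← Finset.sum_mul, ← Finset.sum_mul] at hsum
  have hm0 : (0:ℝ) ≤ m := Nat.cast_nonneg m
  nlinarith [mul_le_mul_of_nonneg_left hsum hm0]

/-- If `L n` is the root in `(1, m+1)` of `ℓ^(n+1) = m (ℓ^(n+1) − 1)/(ℓ − 1)`
for each `n ≥ 1` (with `m ≥ 1` fixed), then `L` is strictly increasing in `n`
(for `n ≥ 1`) and `L n → m + 1` as `n → ∞`. -/
theorem convergence_order_increasing_tendsto (m : ℕ) (hm : 1 ≤ m) (L : ℕ → ℝ)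
    (hmem : ∀ n, 1 ≤ n → L n ∈ Set.Ioo (1 : ℝ) (m + 1))
    (heq : ∀ n, 1 ≤ n →
      (L n) ^ (n + 1) = m * ((L n) ^ (n + 1) - 1) / (L n - 1)) :
    (∀ a b : ℕ, 1 ≤ a → a < b → L a < L b) ∧
    Tendsto L atTop (nhds (m + 1 : ℝ)) := by
  have hm1 : (1:ℝ) ≤ m := by exact_mod_cast hm
  -- polynomial form of the root condition
  have hkey : ∀ n, 1 ≤ n → (L n) ^ (n + 1) * (L n - 1) = m * ((L n) ^ (n + 1) - 1) := by
    intro n hn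
    have h1 : 1 < L n := (hmem n hn).1
    have hne : L n - 1 ≠ 0 := by
      intro h; linarith [sub_eq_zero.mp h]
    have h := heq n hn
    rw [eq_div_iff hne] at h
    exact h
  -- geometric-sum form of the root condition
  have hroot : ∀ n, 1 ≤ n →
      (L n) ^ (n+1) - (m:ℝ) * ∑ i ∈ range (n+1), (L n) ^ i = 0 := by
    intro n hn
    have h1 : 1 < L n := (hmem n hn).1
    have hne : L n ≠ 1 := ne_of_gt h1
    have hne' : L n - 1 ≠ 0 := sub_ne_zero.mpr hne
    rw [geom_sum_eq hne]
    rw [sub_eq_zero, ← mul_div_assoc, eq_div_iff hne']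
    linear_combination hkey n hn
  have hmono : ∀ a b : ℕ, 1 ≤ a → a < b → L a < L b := by
    intro a b ha hab
    have hb : 1 ≤ b := by omega
    have hx1 : 1 < L a := (hmem a ha).1
    have hy1 : 1 < L b := (hmem b hb).1
    by_contra hcon
    push_neg at hcon
    -- hcon : L b ≤ L a
    have hyz : (L b) ^ (b+1) - (m:ℝ) * ∑ i ∈ range (b+1), (L b) ^ i = 0 := hroot b hb
    have h0 : (0:ℝ) ≤ ((L a) ^ (b+1) - (m:ℝ) * ∑ i ∈ range (b+1), (L a) ^ i) * (L b) ^ (b+1) := by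
      have h := aux_key m (b+1) (L a) (L b) (by linarith) hcon
      rw [hyz, zero_mul] at h
      exact h
    have hGx : 0 ≤ (L a) ^ (b+1) - (m:ℝ) * ∑ i ∈ range (b+1), (L a) ^ i := by
      have hyp : (0:ℝ) < (L b) ^ (b+1) := by positivity
      by_contra hneg
      push_neg at hneg
      nlinarith
    have hnex : L a ≠ 1 := ne_of_gt hx1
    rw [geom_sum_eq hnex] at hGx
    have hd : (0:ℝ) < L a - 1 := by linarith
    have h1 : (m:ℝ) * ((L a) ^ (b+1) - 1) ≤ (L a) ^ (b+1) * (L a - 1) := by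
      have h1' : (m:ℝ) * (((L a) ^ (b+1) - 1) / (L a - 1)) ≤ (L a) ^ (b+1) := by linarith
      rw [← mul_div_assoc, div_le_iff₀ hd] at h1'
      exact h1'
    have hka := hkey a ha
    have hpow : (L a) ^ (b+1) = (L a) ^ (b-a) * (L a) ^ (a+1) := by
      rw [← pow_add]; congr 1; omega
    have hgt : 1 < (L a) ^ (b-a) := one_lt_pow₀ hx1 (by omega)
    have h2 : (L a) ^ (b+1) * (L a - 1) = m * ((L a) ^ (b+1) - (L a) ^ (b-a)) := by
      rw [hpow]
      linear_combination ((L a) ^ (b-a)) * hka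
    nlinarith [h1, h2, hgt, hm1]
  refine ⟨hmono, ?_⟩
  have hc1 : 1 < L 1 := (hmem 1 le_rfl).1
  have hcle : ∀ n, 1 ≤ n → L 1 ≤ L n := by
    intro n hn
    rcases eq_or_lt_of_le hn with h | h
    · rw [← h]
    · exact (hmono 1 n le_rfl h).le
  have hgap : ∀ n, 1 ≤ n → (m:ℝ) + 1 - (m:ℝ) * (1 / L 1) ^ (n+1) ≤ L n := by
    intro n hn
    have hx1 : 1 < L n := (hmem n hn).1
    have hxp : (0:ℝ) < (L n) ^ (n+1) := by positivity
    have hcp : (0:ℝ) < (L 1) ^ (n+1) := by positivity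
    have hdiff : (m:ℝ) + 1 - L n = m / (L n) ^ (n+1) := by
      rw [eq_div_iff (ne_of_gt hxp)]
      linear_combination (-1 : ℝ) * hkey n hn
    have hle : (m:ℝ) / (L n) ^ (n+1) ≤ (m:ℝ) / (L 1) ^ (n+1) :=
      div_le_div_of_nonneg_left (Nat.cast_nonneg m) hcp
        (pow_le_pow_left₀ (by linarith) (hcle n hn) _)
    have heqd : (m:ℝ) / (L 1) ^ (n+1) = m * (1 / L 1) ^ (n+1) := by
      rw [one_div, inv_pow, div_eq_mul_inv]
    linarith [hdiff, hle, heqd.le, heqd.ge]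
  have h1 : Tendsto (fun n : ℕ => (m:ℝ) + 1 - (m:ℝ) * (1 / L 1) ^ (n+1)) atTop
      (nhds ((m:ℝ) + 1)) := by
    have hc0 : (0:ℝ) ≤ 1 / L 1 := by
      apply div_nonneg <;> linarith
    have hclt : (1:ℝ) / L 1 < 1 := by
      rw [div_lt_one (by linarith)]; linarith
    have h2 : Tendsto (fun n : ℕ => ((1:ℝ) / L 1) ^ (n+1)) atTop (nhds 0) :=
      (tendsto_pow_atTop_nhds_zero_of_lt_one hc0 hclt).comp (tendsto_add_atTop_nat 1)
    have h3 := Tendsto.sub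
      (tendsto_const_nhds : Tendsto (fun _ : ℕ => (m:ℝ) + 1) atTop (nhds ((m:ℝ) + 1)))
      (h2.const_mul (m:ℝ))
    simpa using h3
  refine tendsto_of_tendsto_of_tendsto_of_le_of_le' h1 tendsto_const_nhds ?_ ?_
  · filter_upwards [eventually_ge_atTop 1] with n hn using hgap n hn
  · filter_upwards [eventually_ge_atTop 1] with n hn using (hmem n hn).2.le
end

section
/- For the optimisation convergence-order equation ℓ² = 1 + m(ℓ − ℓ^{−n}), the sequence of roots ℓₙ ∈ (1, ∞) is increasing in n and converges to (m + √(4 + m²))/2 as n → ∞. -/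
open Filter

private lemma opt_key (m n : ℕ) (x : ℝ) (hx : 1 < x)
    (heqn : x ^ 2 = 1 + m * (x - x ^ (-(n : ℤ)))) :
    (m : ℝ) * ∑ j ∈ Finset.range (n+1), x⁻¹ ^ j = x + 1 := by
  have hx0 : (0:ℝ) < x := by linarith
  have hxne : x ≠ 0 := ne_of_gt hx0
  have hxn : x ^ n ≠ 0 := pow_ne_zero _ hxne
  have hinv : x⁻¹ ≠ 1 := by
    have : x⁻¹ < 1 := inv_lt_one_of_one_lt₀ hx
    linarith
  rw [zpow_neg, zpow_natCast] at heqn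
  rw [geom_sum_eq hinv, mul_div_assoc', div_eq_iff (sub_ne_zero.mpr hinv), inv_pow]
  field_simp at heqn ⊢
  linear_combination x * heqn

/-- For the optimisation convergence-order equation `ℓ² = 1 + m (ℓ − ℓ^{−n})`,
the roots `L n ∈ (1, ∞)` are increasing in `n` and converge to
`(m + √(4 + m²))/2` as `n → ∞`. -/
theorem optimisation_order_tendsto (m : ℕ) (hm : 1 ≤ m) (L : ℕ → ℝ)
    (hmem : ∀ n, 1 ≤ n → 1 < L n)
    (heq : ∀ n, 1 ≤ n →
      (L n) ^ 2 = 1 + m * (L n - (L n) ^ (-(n : ℤ)))) :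
    (∀ a b : ℕ, 1 ≤ a → a < b → L a < L b) ∧
    Tendsto L atTop (nhds ((m + Real.sqrt (4 + (m : ℝ) ^ 2)) / 2)) := by
  have hm0 : (0:ℝ) < m := by exact_mod_cast hm
  have key : ∀ n, 1 ≤ n → (m : ℝ) * ∑ j ∈ Finset.range (n+1), (L n)⁻¹ ^ j = L n + 1 :=
    fun n hn => opt_key m n (L n) (hmem n hn) (heq n hn)
  -- monotonicity
  have mono : ∀ a b : ℕ, 1 ≤ a → a < b → L a < L b := by
    intro a b ha hab
    by_contra hle
    push_neg at hle
    have hb : 1 ≤ b := le_trans ha hab.le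
    have hxa : 1 < L a := hmem a ha
    have hxb : 1 < L b := hmem b hb
    have hb0 : (0:ℝ) < L b := by linarith
    have h1 : ∑ j ∈ Finset.range (a+1), (L a)⁻¹ ^ j ≤
        ∑ j ∈ Finset.range (a+1), (L b)⁻¹ ^ j := by
      refine Finset.sum_le_sum fun j _ => ?_
      refine pow_le_pow_left₀ (by positivity) ?_ j
      exact inv_anti₀ hb0 hle
    have h2 : ∑ j ∈ Finset.range (a+1), (L b)⁻¹ ^ j <
        ∑ j ∈ Finset.range (b+1), (L b)⁻¹ ^ j := by
      refine Finset.sum_lt_sum_of_subset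
        (Finset.range_subset_range.mpr (by omega)) (i := a+1) ?_ ?_ ?_ ?_
      · exact Finset.mem_range.mpr (by omega)
      · exact Finset.notMem_range_self
      · positivity
      · intro j _ _; positivity
    have := key a ha
    have := key b hb
    nlinarith
  -- boundedness
  have bdd : ∀ n, 1 ≤ n → L n ≤ m + 1 := by
    intro n hn
    have hx : 1 < L n := hmem n hn
    have heqn := heq n hn
    rw [zpow_neg, zpow_natCast] at heqn
    have hpos : 0 < ((L n) ^ n)⁻¹ := by positivity
    nlinarith
  -- the shifted sequence
  set f : ℕ → ℝ := fun k => L (k + 1) with hf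
  have hfmono : Monotone f :=
    monotone_nat_of_le_succ fun k => (mono (k+1) (k+2) (by omega) (by omega)).le
  have hbdd : BddAbove (Set.range f) := by
    refine ⟨m + 1, ?_⟩
    rintro _ ⟨k, rfl⟩
    exact bdd (k+1) (by omega)
  have htend : Tendsto f atTop (nhds (⨆ k, f k)) := tendsto_atTop_ciSup hfmono hbdd
  set l := ⨆ k, f k with hl
  have hL1f : ∀ k, L 1 ≤ f k := by
    intro k
    rcases Nat.eq_zero_or_pos k with rfl | hk
    · exact le_refl _
    · exact (mono 1 (k+1) le_rfl (by omega)).le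
  have hl1 : 1 < l := lt_of_lt_of_le (hmem 1 le_rfl) (le_ciSup hbdd 0)
  have hL1 : 1 < L 1 := hmem 1 le_rfl
  -- the remainder term tends to 0
  have hterm : Tendsto (fun k => (f k) ^ (-((k:ℕ)+1 : ℤ))) atTop (nhds 0) := by
    have hgeo : Tendsto (fun k : ℕ => ((L 1)⁻¹) ^ (k+1)) atTop (nhds 0) := by
      have := tendsto_pow_atTop_nhds_zero_of_lt_one
        (by positivity : (0:ℝ) ≤ (L 1)⁻¹) (inv_lt_one_of_one_lt₀ hL1)
      exact this.comp (tendsto_add_atTop_nat 1)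
    refine squeeze_zero (fun k => ?_) (fun k => ?_) hgeo
    · have : 0 < f k := lt_trans one_pos (lt_of_lt_of_le hL1 (hL1f k))
      positivity
    · have hfk : 1 < f k := lt_of_lt_of_le hL1 (hL1f k)
      have hfk0 : (0:ℝ) < f k := by linarith
      rw [show (-((k:ℕ)+1 : ℤ)) = -((k+1 : ℕ) : ℤ) by push_cast; ring,
        zpow_neg, zpow_natCast, ← inv_pow]
      refine pow_le_pow_left₀ (by positivity) ?_ _
      rw [inv_le_inv₀ hfk0 (by linarith : (0:ℝ) < L 1)]
      exact hL1f k
  -- pass to the limit in the equation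
  have hlim : l ^ 2 = 1 + m * l := by
    have h1 : Tendsto (fun k => (f k) ^ 2) atTop (nhds (l ^ 2)) := htend.pow 2
    have h2 : Tendsto (fun k => 1 + (m:ℝ) * (f k - (f k) ^ (-((k:ℕ)+1 : ℤ))))
        atTop (nhds (1 + m * (l - 0))) :=
      tendsto_const_nhds.add (tendsto_const_nhds.mul (htend.sub hterm))
    have h3 : (fun k => (f k) ^ 2) =
        (fun k => 1 + (m:ℝ) * (f k - (f k) ^ (-((k:ℕ)+1 : ℤ)))) := by
      funext k
      have := heq (k+1) (by omega)
      simpa [hf] using this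
    rw [h3] at h1
    have := tendsto_nhds_unique h1 h2
    rw [this]; ring
  -- identify the limit
  have hs2 : Real.sqrt (4 + (m:ℝ)^2) ^ 2 = 4 + (m:ℝ)^2 :=
    Real.sq_sqrt (by positivity)
  have hml : (m:ℝ) < l := by nlinarith
  have hfinal : ((m:ℝ) + Real.sqrt (4 + (m:ℝ)^2)) / 2 = l := by
    have h4 : (4 + (m:ℝ)^2) = (2*l - m)^2 := by nlinarith
    rw [h4, Real.sqrt_sq (by linarith)]
    ring
  refine ⟨mono, ?_⟩
  rw [hfinal]
  exact (tendsto_add_atTop_iff_nat 1).mp htend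
end

section
/- The asymptotic order of the first-derivative optimisation methods with full memory is 1 + √2: the limit of roots of ℓ² = 1 + 2(ℓ − ℓ^{−n}) as n → ∞ is the unique root greater than 1 of ℓ² − 2ℓ − 1 = 0, namely ℓ = 1 + √2 ≈ 2.41421. -/
open Filter

/-- The asymptotic order of the first-derivative optimisation methods with
full memory is `1 + √2`: it is the unique root greater than `1` of
`ℓ² − 2ℓ − 1 = 0`, and the roots of `ℓ² = 1 + 2(ℓ − ℓ^{−n})` tend to it as
`n → ∞`. -/
theorem first_derivative_optimisation_limit (L : ℕ → ℝ)
    (hmem : ∀ n, 1 ≤ n → 1 < L n)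
    (heq : ∀ n, 1 ≤ n →
      (L n) ^ 2 = 1 + 2 * (L n - (L n) ^ (-(n : ℤ)))) :
    (∀ ℓ : ℝ, (1 < ℓ ∧ ℓ ^ 2 - 2 * ℓ - 1 = 0) ↔ ℓ = 1 + Real.sqrt 2) ∧
    Tendsto L atTop (nhds (1 + Real.sqrt 2)) := by
  have hs2 : Real.sqrt 2 ^ 2 = 2 := Real.sq_sqrt (by norm_num)
  have hs2ge : 1 ≤ Real.sqrt 2 := by nlinarith [Real.sqrt_nonneg 2]
  constructor
  · intro ℓ
    constructor
    · rintro ⟨h1, h0⟩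
      have hsq : (ℓ - 1) ^ 2 = 2 := by nlinarith
      have : ℓ - 1 = Real.sqrt 2 := by
        rw [← hsq, Real.sqrt_sq (by linarith)]
      linarith
    · rintro rfl
      exact ⟨by linarith, by nlinarith⟩
  · have key : ∀ n : ℕ, 1 ≤ n →
        1 + Real.sqrt 2 - 2 * (1/2 : ℝ) ^ n ≤ L n ∧ L n ≤ 1 + Real.sqrt 2 := by
      intro n hn
      have hx := hmem n hn
      have he := heq n hn
      set x := L n with hxdef
      have hxpos : 0 < x := by linarith
      have hzp : x ^ (-(n:ℤ)) = (x ^ n)⁻¹ := by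
        rw [zpow_neg, zpow_natCast]
      rw [hzp] at he
      have hyn : 0 < x ^ n := pow_pos hxpos n
      have hinvpos : 0 < (x ^ n)⁻¹ := inv_pos.mpr hyn
      have hi : (x - 1) ^ 2 = 2 - 2 * (x ^ n)⁻¹ := by linear_combination he
      have hc : x ^ n * (x ^ n)⁻¹ = 1 := mul_inv_cancel₀ (ne_of_gt hyn)
      have heq2 : x ^ n * (x - 1) ^ 2 = 2 * x ^ n - 2 := by
        linear_combination (x ^ n) * hi - 2 * hc
      have hn1 : (1:ℝ) ≤ (n:ℝ) := by exact_mod_cast hn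
      -- Step A : 2 ≤ x
      have hx2 : 2 ≤ x := by
        by_contra hlt
        push_neg at hlt
        have hε0 : 0 < x - 1 := by linarith
        have hε1 : x - 1 < 1 := by linarith
        have hb : 1 + (n:ℝ) * (x - 1) ≤ x ^ n := by
          have := one_add_mul_le_pow (a := x - 1) (by linarith) n
          simpa using this
        have h2' : x ^ n * (x - 1) ^ 2 < x ^ n := by
          nlinarith [hyn, hε0]
        have hylt : x ^ n < 2 := by linarith
        have h3 : 2 * (n:ℝ) * (x - 1) ≤ 2 * x ^ n - 2 := by nlinarith [hb]
        have h4 : x ^ n * (x - 1) ^ 2 < 2 * (x - 1) ^ 2 :=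
          mul_lt_mul_of_pos_right hylt (pow_pos hε0 2)
        have h5 : (n:ℝ) * (x - 1) < (x - 1) ^ 2 := by nlinarith
        have h6 : (n:ℝ) < x - 1 := by nlinarith [hε0]
        linarith
      -- Step B : bounds
      have hpow : (2:ℝ) ^ n ≤ x ^ n := pow_le_pow_left₀ (by norm_num) hx2 n
      have hinv : (x ^ n)⁻¹ ≤ (1/2 : ℝ) ^ n := by
        have h2n : (0:ℝ) < 2 ^ n := by positivity
        have := inv_anti₀ h2n hpow
        calc (x ^ n)⁻¹ ≤ ((2:ℝ) ^ n)⁻¹ := this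
          _ = (1/2 : ℝ) ^ n := by rw [one_div, inv_pow]
      have hsqle : (x - 1) ^ 2 ≤ 2 := by nlinarith [heq2, hyn, hinvpos, hc]
      have hup : x ≤ 1 + Real.sqrt 2 := by
        have h1 : x - 1 = Real.sqrt ((x - 1) ^ 2) := (Real.sqrt_sq (by linarith)).symm
        have h2 : Real.sqrt ((x - 1) ^ 2) ≤ Real.sqrt 2 := Real.sqrt_le_sqrt hsqle
        linarith
      refine ⟨?_, hup⟩
      have hfac : (Real.sqrt 2 - (x - 1)) * (Real.sqrt 2 + (x - 1)) = 2 - (x - 1) ^ 2 := by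
        linear_combination hs2
      have hden : (1:ℝ) ≤ Real.sqrt 2 + (x - 1) := by linarith
      have hnum : 0 ≤ Real.sqrt 2 - (x - 1) := by linarith
      have hstep : Real.sqrt 2 - (x - 1) ≤ 2 - (x - 1) ^ 2 := by
        calc Real.sqrt 2 - (x - 1) = (Real.sqrt 2 - (x - 1)) * 1 := by ring
          _ ≤ (Real.sqrt 2 - (x - 1)) * (Real.sqrt 2 + (x - 1)) :=
            mul_le_mul_of_nonneg_left hden hnum
          _ = 2 - (x - 1) ^ 2 := hfac
      have hi2 : 2 - (x - 1) ^ 2 ≤ 2 * (1/2:ℝ) ^ n := by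
        rw [hi]; linarith
      linarith
    have hlim : Tendsto (fun n : ℕ => 1 + Real.sqrt 2 - 2 * (1/2 : ℝ) ^ n) atTop
        (nhds (1 + Real.sqrt 2)) := by
      have h0 : Tendsto (fun n : ℕ => (1/2 : ℝ) ^ n) atTop (nhds 0) :=
        tendsto_pow_atTop_nhds_zero_of_lt_one (by norm_num) (by norm_num)
      have h1 := h0.const_mul (2:ℝ)
      have := tendsto_const_nhds (x := 1 + Real.sqrt 2) (f := atTop (α := ℕ)) |>.sub h1
      simpa using this
    refine tendsto_of_tendsto_of_tendsto_of_le_of_le' hlim tendsto_const_nhds ?_ ?_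
    · filter_upwards [eventually_ge_atTop 1] with n hn using (key n hn).1
    · filter_upwards [eventually_ge_atTop 1] with n hn using (key n hn).2
end
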